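/- arXiv:1906.02775 — 2 statements merged into one kernel-verified Lean document; each statement's English description precedes it below -/
import Mathlib

section
/- In a linear Fisher market, if x and x' are both maximizers of the Eisenberg–Gale program, then v_i · x_i = v_i · x'_i for every buyer i; consequently the equilibrium item prices p_j = max_i (B_i / (v_i · x_i)) v_{ij} are the same for all maximizers, i.e., the utility levels and the CEEI prices are unique even though the allocation may not be. -/
/-- Extended-real-valued logarithm: `elog t = log t` for `t > 0` and `⊥` (i.e. `-∞`)
for `t ≤ 0`. -/
noncomputable def elog (t : ℝ) : EReal :=
  if t ≤ 0 then ⊥ else ((Real.log t : ℝ) : EReal)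

/-- An allocation is feasible if it is nonnegative and allocates at most the supply
`s j` of each item `j`. -/
def Feasible {ι : Type*} [Fintype ι] {m : ℕ} (s : Fin m → ℝ)
    (x : ι → Fin m → ℝ) : Prop :=
  (∀ i j, 0 ≤ x i j) ∧ ∀ j, ∑ i, x i j ≤ s j

/-- The Eisenberg–Gale objective `∑ i, B i * log (v i · x i)` (valued in `EReal`). -/
noncomputable def EGobj {ι : Type*} [Fintype ι] {m : ℕ} (v : ι → Fin m → ℝ)
    (B : ι → ℝ) (x : ι → Fin m → ℝ) : EReal :=
  ∑ i, (B i : EReal) * elog (∑ j, v i j * x i j)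

/-- `x` is a maximizer of the Eisenberg–Gale program (a CEEI allocation). -/
def EGMax {ι : Type*} [Fintype ι] {m : ℕ} (s : Fin m → ℝ) (v : ι → Fin m → ℝ)
    (B : ι → ℝ) (x : ι → Fin m → ℝ) : Prop :=
  Feasible s x ∧ ∀ y, Feasible s y → EGobj v B y ≤ EGobj v B x

section Aux

variable {n m : ℕ}

lemma EGobj_eq_coe (v : Fin n → Fin m → ℝ) (B : Fin n → ℝ) (x : Fin n → Fin m → ℝ)
    (h : ∀ i, 0 < ∑ j, v i j * x i j) :
    EGobj v B x = ((∑ i, B i * Real.log (∑ j, v i j * x i j) : ℝ) : EReal) := by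
  unfold EGobj elog
  rw [show ((∑ i, B i * Real.log (∑ j, v i j * x i j) : ℝ) : EReal)
      = ∑ i, ((B i * Real.log (∑ j, v i j * x i j) : ℝ) : EReal) from
    map_sum (⟨⟨Real.toEReal, EReal.coe_zero⟩, fun a b => EReal.coe_add a b⟩ : ℝ →+ EReal) _ _]
  refine Finset.sum_congr rfl fun i _ => ?_
  rw [if_neg (not_le.mpr (h i)), ← EReal.coe_mul]

lemma EGobj_eq_bot (v : Fin n → Fin m → ℝ) (B : Fin n → ℝ) (x : Fin n → Fin m → ℝ)
    (hB : ∀ i, 0 < B i) (i0 : Fin n) (h : ∑ j, v i0 j * x i0 j ≤ 0) :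
    EGobj v B x = ⊥ := by
  unfold EGobj
  rw [← Finset.add_sum_erase _ _ (Finset.mem_univ i0)]
  unfold elog
  rw [if_pos h, EReal.coe_mul_bot_of_pos (hB i0), EReal.bot_add]

/-- Every buyer's utility is positive at an EG maximizer. -/
lemma EGMax_util_pos (hm : 0 < m) (v : Fin n → Fin m → ℝ) (B : Fin n → ℝ)
    (s : Fin m → ℝ) (hv : ∀ i j, 0 < v i j) (hB : ∀ i, 0 < B i)
    (hs : ∀ j, 0 < s j) (x : Fin n → Fin m → ℝ) (hx : EGMax s v B x) :
    ∀ i, 0 < ∑ j, v i j * x i j := by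
  intro i
  by_contra hcon
  push_neg at hcon
  have hn : 0 < n := i.pos
  -- the uniform allocation
  set y : Fin n → Fin m → ℝ := fun _ j => s j / n with hy
  have hyfeas : Feasible s y := by
    constructor
    · intro i j
      simp only [hy]
      have h1 := hs j
      have h2 : (0:ℝ) < n := by exact_mod_cast hn
      positivity
    · intro j
      simp only [hy, Finset.sum_const, Finset.card_univ, Fintype.card_fin, nsmul_eq_mul]
      rw [mul_div_cancel₀]
      · positivity
  have hypos : ∀ i, 0 < ∑ j, v i j * y i j := by
    intro i
    refine Finset.sum_pos (fun j _ => ?_) ?_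
    · have := hs j
      have := hv i j
      have : (0:ℝ) < n := by exact_mod_cast hn
      positivity
    · have : Nonempty (Fin m) := ⟨⟨0, hm⟩⟩
      exact Finset.univ_nonempty
  have hle := hx.2 y hyfeas
  rw [EGobj_eq_bot v B x hB i hcon, EGobj_eq_coe v B y hypos] at hle
  exact absurd hle (by simp)

end Aux

lemma log_midpoint_le {a b : ℝ} (ha : 0 < a) (hb : 0 < b) :
    (Real.log a + Real.log b) / 2 ≤ Real.log ((a + b) / 2) := by
  have h := strictConcaveOn_log_Ioi.concaveOn.2 (Set.mem_Ioi.mpr ha) (Set.mem_Ioi.mpr hb)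
    (by norm_num : (0:ℝ) ≤ 1/2) (by norm_num : (0:ℝ) ≤ 1/2) (by norm_num)
  simp only [smul_eq_mul] at h
  calc (Real.log a + Real.log b) / 2 = 1/2 * Real.log a + 1/2 * Real.log b := by ring
    _ ≤ Real.log (1/2 * a + 1/2 * b) := h
    _ = Real.log ((a + b) / 2) := by ring_nf

lemma log_midpoint_lt {a b : ℝ} (ha : 0 < a) (hb : 0 < b) (hab : a ≠ b) :
    (Real.log a + Real.log b) / 2 < Real.log ((a + b) / 2) := by
  have h := strictConcaveOn_log_Ioi.2 (Set.mem_Ioi.mpr ha) (Set.mem_Ioi.mpr hb) hab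
    (by norm_num : (0:ℝ) < 1/2) (by norm_num : (0:ℝ) < 1/2) (by norm_num)
  simp only [smul_eq_mul] at h
  calc (Real.log a + Real.log b) / 2 = 1/2 * Real.log a + 1/2 * Real.log b := by ring
    _ < Real.log (1/2 * a + 1/2 * b) := h
    _ = Real.log ((a + b) / 2) := by ring_nf

/-- **Uniqueness of CEEI utility levels and prices.**  In a linear Fisher market,
if `x` and `x'` are both maximizers of the Eisenberg–Gale program, then
`v i · x i = v i · x' i` for every buyer `i`; consequently the equilibrium item
prices `p j = max_i (B i / (v i · x i)) * v i j` are the same for both maximizers,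
i.e. the utility levels and the CEEI prices are unique even though the allocation
may not be. -/
theorem eg_utilities_and_prices_unique {n m : ℕ} (hm : 0 < m)
    (v : Fin n → Fin m → ℝ) (B : Fin n → ℝ) (s : Fin m → ℝ)
    (hv : ∀ i j, 0 < v i j) (hB : ∀ i, 0 < B i) (hs : ∀ j, 0 < s j)
    (x x' : Fin n → Fin m → ℝ) (hx : EGMax s v B x) (hx' : EGMax s v B x') :
    (∀ i, (∑ j, v i j * x i j) = ∑ j, v i j * x' i j) ∧
    (∀ (j : Fin m) (q q' : ℝ),
      IsGreatest (Set.range fun i => (B i / (∑ j', v i j' * x i j')) * v i j) q →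
      IsGreatest (Set.range fun i => (B i / (∑ j', v i j' * x' i j')) * v i j) q' →
      q = q') := by
  have hupos := EGMax_util_pos hm v B s hv hB hs x hx
  have hupos' := EGMax_util_pos hm v B s hv hB hs x' hx'
  -- equal objective values (as reals)
  have hFF' : (∑ i, B i * Real.log (∑ j, v i j * x i j))
      = ∑ i, B i * Real.log (∑ j, v i j * x' i j) := by
    have h1 := hx.2 x' hx'.1
    have h2 := hx'.2 x hx.1
    rw [EGobj_eq_coe v B x hupos, EGobj_eq_coe v B x' hupos',
      EReal.coe_le_coe_iff] at h1 h2
    linarith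
  have hmain : ∀ i, (∑ j, v i j * x i j) = ∑ j, v i j * x' i j := by
    by_contra hcon
    push_neg at hcon
    obtain ⟨i0, hi0⟩ := hcon
    -- the midpoint allocation
    set z : Fin n → Fin m → ℝ := fun i j => (x i j + x' i j) / 2 with hz
    have hzfeas : Feasible s z := by
      constructor
      · intro i j
        have := hx.1.1 i j
        have := hx'.1.1 i j
        simp only [hz]
        positivity
      · intro j
        have h1 := hx.1.2 j
        have h2 := hx'.1.2 j
        simp only [hz]
        rw [← Finset.sum_div, Finset.sum_add_distrib]
        linarith
    have hzutil : ∀ i, (∑ j, v i j * z i j)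
        = ((∑ j, v i j * x i j) + ∑ j, v i j * x' i j) / 2 := by
      intro i
      rw [← Finset.sum_add_distrib, Finset.sum_div]
      refine Finset.sum_congr rfl fun j _ => ?_
      simp only [hz]; ring
    have hzpos : ∀ i, 0 < ∑ j, v i j * z i j := by
      intro i
      rw [hzutil i]
      have := hupos i; have := hupos' i
      positivity
    have hle := hx.2 z hzfeas
    rw [EGobj_eq_coe v B z hzpos, EGobj_eq_coe v B x hupos, EReal.coe_le_coe_iff] at hle
    have hkey : (∑ i, B i * Real.log (∑ j, v i j * x i j))
        < ∑ i, B i * Real.log (∑ j, v i j * z i j) := by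
      have hrw : (∑ i, B i * Real.log (∑ j, v i j * x i j))
          = ∑ i, B i * ((Real.log (∑ j, v i j * x i j)
              + Real.log (∑ j, v i j * x' i j)) / 2) := by
        calc (∑ i, B i * Real.log (∑ j, v i j * x i j))
            = ((∑ i, B i * Real.log (∑ j, v i j * x i j))
              + ∑ i, B i * Real.log (∑ j, v i j * x' i j)) / 2 := by
              rw [← hFF']; ring
          _ = _ := by
              rw [← Finset.sum_add_distrib, Finset.sum_div]
              exact Finset.sum_congr rfl fun i _ => by ring
      rw [hrw]
      refine Finset.sum_lt_sum (fun i _ => ?_) ⟨i0, Finset.mem_univ i0, ?_⟩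
      · rw [hzutil i]
        exact mul_le_mul_of_nonneg_left (log_midpoint_le (hupos i) (hupos' i)) (hB i).le
      · rw [hzutil i0]
        exact mul_lt_mul_of_pos_left (log_midpoint_lt (hupos i0) (hupos' i0) hi0) (hB i0)
    exact absurd hle (not_le.mpr hkey)
  refine ⟨hmain, fun j q q' hq hq' => ?_⟩
  have hfun : (fun i => (B i / (∑ j', v i j' * x i j')) * v i j)
      = fun i => (B i / (∑ j', v i j' * x' i j')) * v i j := by
    funext i; rw [hmain i]
  rw [hfun] at hq
  exact hq.unique hq'
end

section
/- Fix a buyer i in a linear Fisher market. Let p be the (unique) CEEI price vector of the market consisting of all buyers except i (with their budgets), and let p' be the CEEI price vector of the full market including buyer i with budget B_i. Then for every item j, p_j ≤ p'_j ≤ p_j + B_i / s_j; that is, a single buyer can affect the price of any item j by at most B_i / s_j. -/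
/-!
Moving a little of one item between two buyers, or handing out unsold supply, cannot raise the
Eisenberg–Gale objective; the resulting first-order conditions make every maximizer a competitive
equilibrium: all supply is sold, each buyer buys only items of maximal bang-per-buck
`B k / u k * v k j = p j`, hence spends exactly its budget, and `∑ j, p j * s j = ∑ k, B k`.

Adding a buyer cannot lower a price. Otherwise let `S` be the items whose price dropped and `T`
the old buyers whose utility price `B k / u k` dropped: before, all of `S` went to `T`; after,
`T` buys only items of `S` and, having gained utility, spends more than its budget at the old
prices. So at the old prices the value of `S` is at most the budget of `T`, which is less than
what `T` now spends, which is at most the value of `S`. Hence `p ≤ p'`, and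
`∑ j, (p' j - p j) * s j = B i` bounds each increase by `B i / s j`.
-/

open Finset Topology

lemma EReal.coe_finset_sum {α : Type*} (t : Finset α) (f : α → ℝ) :
    ((∑ a ∈ t, f a : ℝ) : EReal) = ∑ a ∈ t, (f a : EReal) :=
  map_sum (⟨⟨(↑), EReal.coe_zero⟩, EReal.coe_add⟩ : ℝ →+ EReal) f t

lemma HasDerivAt.nonpos_of_eventually_le {f : ℝ → ℝ} {f' x : ℝ} (hf : HasDerivAt f f' x)
    (hle : ∀ᶠ t in 𝓝[>] x, f t ≤ f x) : f' ≤ 0 :=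
  le_of_tendsto ((hasDerivAt_iff_tendsto_slope.1 hf).mono_left (nhdsGT_le_nhdsNE x)) <|
    (hle.and self_mem_nhdsWithin).mono fun t ⟨h, ht⟩ => by
      rw [slope_def_field]
      exact div_nonpos_of_nonpos_of_nonneg (sub_nonpos.2 h) (sub_nonneg.2 (le_of_lt ht))

section

variable {ι : Type*} {m : ℕ}

def utility (v x : ι → Fin m → ℝ) (k : ι) : ℝ := ∑ j, v k j * x k j

lemma utility_add_smul (v x d : ι → Fin m → ℝ) (ε : ℝ) (k : ι) :
    utility v (x + ε • d) k = utility v x k + ε * utility v d k := by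
  simp only [utility, Pi.add_apply, Pi.smul_apply, smul_eq_mul, mul_add, sum_add_distrib, mul_sum]
  exact congrArg _ (sum_congr rfl fun j _ => by ring)

lemma utility_sub (v x y : ι → Fin m → ℝ) (k : ι) :
    utility v (x - y) k = utility v x k - utility v y k := by
  simp only [utility, Pi.sub_apply, mul_sub, sum_sub_distrib]

def singleAlloc [DecidableEq ι] (k : ι) (j : Fin m) : ι → Fin m → ℝ := Pi.single k (Pi.single j 1)

lemma singleAlloc_apply [DecidableEq ι] (k k' : ι) (j j' : Fin m) :
    singleAlloc k j k' j' = if k' = k ∧ j' = j then 1 else 0 := by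
  simp only [singleAlloc, Pi.single_apply]
  split_ifs <;> simp_all

lemma singleAlloc_nonneg [DecidableEq ι] (k k' : ι) (j j' : Fin m) : 0 ≤ singleAlloc k j k' j' := by
  rw [singleAlloc_apply]
  split_ifs <;> norm_num

lemma utility_singleAlloc [DecidableEq ι] (v : ι → Fin m → ℝ) (k l : ι) (j : Fin m) :
    utility v (singleAlloc l j) k = if k = l then v k j else 0 := by
  rcases eq_or_ne k l with rfl | h <;> simp [utility, singleAlloc, Pi.single_apply, *]

lemma sum_singleAlloc_apply [Fintype ι] [DecidableEq ι] (k : ι) (j j' : Fin m) :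
    ∑ k', singleAlloc k j k' j' = if j' = j then 1 else 0 := by
  rw [← Finset.sum_apply, singleAlloc, sum_pi_single', if_pos (mem_univ k), Pi.single_apply]

variable [Fintype ι] {s : Fin m → ℝ} {v : ι → Fin m → ℝ} {B : ι → ℝ} {x : ι → Fin m → ℝ}

lemma EGobj_eq_coe_sum (B : ι → ℝ) (hu : ∀ k, 0 < utility v x k) :
    EGobj v B x = ((∑ k, B k * Real.log (utility v x k) : ℝ) : EReal) := by
  rw [EGobj, EReal.coe_finset_sum]
  refine sum_congr rfl fun k _ => ?_
  simp only [elog, utility] at hu ⊢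
  rw [if_neg (hu k).not_ge, EReal.coe_mul]

lemma EGMax.sum_mul_utility_div_nonpos (hx : EGMax s v B x) (hu : ∀ k, 0 < utility v x k)
    {d : ι → Fin m → ℝ} {δ : ℝ} (hδ : 0 < δ) (hd : ∀ ε ∈ Set.Ioo 0 δ, Feasible s (x + ε • d)) :
    ∑ k, B k * utility v d k / utility v x k ≤ 0 := by
  let f : ℝ → ℝ := fun ε => ∑ k, B k * Real.log (utility v x k + ε * utility v d k)
  have hf : HasDerivAt f (∑ k, B k * utility v d k / utility v x k) 0 := by
    refine HasDerivAt.fun_sum fun k _ => ?_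
    refine ((((hasDerivAt_id' 0).mul_const _).const_add _).log ?_).const_mul (B k) |>.congr_deriv ?_
    · simpa using (hu k).ne'
    · simp [mul_div_assoc]
  refine hf.nonpos_of_eventually_le ?_
  have hpos : ∀ᶠ ε in 𝓝 (0 : ℝ), ∀ k, 0 < utility v x k + ε * utility v d k :=
    Filter.eventually_all.2 fun k =>
      continuousAt_const.eventually_lt (by fun_prop) (by simpa using hu k)
  filter_upwards [nhdsWithin_le_nhds hpos, Ioo_mem_nhdsGT hδ] with ε hε hεδ
  have hle := hx.2 _ (hd ε hεδ)
  simp_rw [← utility_add_smul] at hε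
  rw [EGobj_eq_coe_sum B hε, EGobj_eq_coe_sum B hu, EReal.coe_le_coe_iff] at hle
  simpa [f, utility_add_smul] using hle

lemma EGMax.utility_pos [Nonempty (Fin m)] (hv : ∀ k j, 0 < v k j) (hB : ∀ k, 0 < B k)
    (hs : ∀ j, 0 < s j) (hx : EGMax s v B x) (k : ι) : 0 < utility v x k := by
  classical
  by_contra! hk
  have hcard : 0 < (Fintype.card ι : ℝ) := Nat.cast_pos.2 (Fintype.card_pos_iff.2 ⟨k⟩)
  let y : ι → Fin m → ℝ := fun _ j => s j / Fintype.card ι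
  have hy : Feasible s y :=
    ⟨fun _ j => (div_pos (hs j) hcard).le, fun j => by simp [y, mul_div_cancel₀ _ hcard.ne']⟩
  have hyu : ∀ k, 0 < utility v y k := fun k =>
    sum_pos (fun j _ => mul_pos (hv k j) (div_pos (hs j) hcard)) univ_nonempty
  have hbot : EGobj v B x = ⊥ := by
    simp only [utility] at hk
    rw [EGobj, ← add_sum_erase _ _ (mem_univ k), elog, if_pos hk,
      EReal.mul_bot_of_pos (EReal.coe_pos.2 (hB k)), EReal.bot_add]
  have hle := hx.2 y hy
  rw [hbot, EGobj_eq_coe_sum B hyu] at hle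
  exact (EReal.bot_lt_coe _).not_ge hle

lemma EGMax.sum_eq_supply [Nonempty ι] (hv : ∀ k j, 0 < v k j) (hB : ∀ k, 0 < B k)
    (hx : EGMax s v B x) (hu : ∀ k, 0 < utility v x k) (j : Fin m) : ∑ k, x k j = s j := by
  classical
  refine (hx.1.2 j).antisymm (not_lt.1 fun hlt => ?_)
  obtain ⟨k⟩ := ‹Nonempty ι›
  have hfeas : ∀ ε ∈ Set.Ioo 0 (s j - ∑ k, x k j),
      Feasible s (x + ε • singleAlloc k j) := by
    refine fun ε hε => ⟨fun k' j' => ?_, fun j' => ?_⟩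
    · exact add_nonneg (hx.1.1 k' j') (mul_nonneg hε.1.le (singleAlloc_nonneg _ _ _ _))
    · simp only [Pi.add_apply, Pi.smul_apply, smul_eq_mul, sum_add_distrib, ← mul_sum,
        sum_singleAlloc_apply]
      split_ifs with h
      · subst h; linarith [hε.2]
      · simpa using hx.1.2 j'
  have hnonpos := hx.sum_mul_utility_div_nonpos hu (sub_pos.2 hlt) hfeas
  simp only [utility_singleAlloc, mul_ite, mul_zero, ite_div, zero_div, sum_ite_eq', mem_univ,
    if_true] at hnonpos
  exact hnonpos.not_gt (div_pos (mul_pos (hB k) (hv k j)) (hu k))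

lemma EGMax.div_utility_mul_le (hx : EGMax s v B x) (hu : ∀ k, 0 < utility v x k) {k l : ι}
    {j : Fin m} (hkj : 0 < x k j) :
    B l / utility v x l * v l j ≤ B k / utility v x k * v k j := by
  classical
  rcases eq_or_ne k l with rfl | hkl
  · rfl
  have hfeas : ∀ ε ∈ Set.Ioo 0 (x k j),
      Feasible s (x + ε • (singleAlloc l j - singleAlloc k j)) := by
    refine fun ε hε => ⟨fun k' j' => ?_, fun j' => ?_⟩
    · simp only [Pi.add_apply, Pi.smul_apply, Pi.sub_apply, smul_eq_mul, singleAlloc_apply]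
      have := hx.1.1 k' j'
      split_ifs with h₁ h₂ h₂
      · exact absurd (h₂.1.symm.trans h₁.1) hkl
      · linarith [hε.1]
      · obtain ⟨rfl, rfl⟩ := h₂
        linarith [hε.2]
      · linarith
    · simpa [sum_add_distrib, ← mul_sum, sum_sub_distrib, sum_singleAlloc_apply] using hx.1.2 j'
  have hnonpos := hx.sum_mul_utility_div_nonpos hu hkj hfeas
  simp only [utility_sub, utility_singleAlloc, mul_sub, sub_div, sum_sub_distrib, mul_ite, mul_zero,
    ite_div, zero_div, sum_ite_eq', mem_univ, if_true] at hnonpos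
  rw [div_mul_eq_mul_div, div_mul_eq_mul_div]
  linarith

structure IsEquilibrium (s : Fin m → ℝ) (v : ι → Fin m → ℝ) (B : ι → ℝ) (x : ι → Fin m → ℝ)
    (p : Fin m → ℝ) : Prop where
  nonneg : ∀ k j, 0 ≤ x k j
  clears : ∀ j, ∑ k, x k j = s j
  utility_pos : ∀ k, 0 < utility v x k
  le_price : ∀ k j, B k / utility v x k * v k j ≤ p j
  eq_price_of_pos : ∀ k j, 0 < x k j → B k / utility v x k * v k j = p j

lemma EGMax.isEquilibrium [Nonempty (Fin m)] (hv : ∀ k j, 0 < v k j) (hB : ∀ k, 0 < B k)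
    (hs : ∀ j, 0 < s j) (hx : EGMax s v B x) {p : Fin m → ℝ}
    (hp : ∀ j, IsGreatest (Set.range fun k => B k / (∑ j', v k j' * x k j') * v k j) (p j)) :
    IsEquilibrium s v B x p := by
  have hu := hx.utility_pos hv hB hs
  obtain ⟨k, -⟩ := (hp (Classical.arbitrary _)).1
  have : Nonempty ι := ⟨k⟩
  have le_price k j : B k / utility v x k * v k j ≤ p j := (hp j).2 ⟨k, rfl⟩
  refine ⟨hx.1.1, hx.sum_eq_supply hv hB hu, hu, le_price, fun k j hkj => ?_⟩
  obtain ⟨l, hl⟩ := (hp j).1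
  exact (le_price k j).antisymm (hl ▸ hx.div_utility_mul_le hu hkj)

namespace IsEquilibrium

variable {p : Fin m → ℝ} (hE : IsEquilibrium s v B x p)
include hE

lemma price_mul_eq (k : ι) (j : Fin m) : p j * x k j = B k / utility v x k * v k j * x k j := by
  rcases (hE.nonneg k j).eq_or_lt with h | h
  · simp [← h]
  · rw [hE.eq_price_of_pos k j h]

lemma sum_price_mul (k : ι) : ∑ j, p j * x k j = B k := by
  simp_rw [hE.price_mul_eq, mul_assoc, ← mul_sum]
  exact div_mul_cancel₀ _ (hE.utility_pos k).ne'

lemma sum_price_mul_supply : ∑ j, p j * s j = ∑ k, B k := by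
  simp_rw [← hE.clears, mul_sum]
  rw [sum_comm]
  exact sum_congr rfl fun k _ => hE.sum_price_mul k

lemma exists_pos {j : Fin m} (hs : 0 < s j) : ∃ k, 0 < x k j := by
  simpa using exists_lt_of_sum_lt (s := univ) (f := 0) (g := fun k => x k j) (by simpa [hE.clears])

lemma price_pos (hv : ∀ k j, 0 < v k j) (hB : ∀ k, 0 < B k) {j : Fin m} (hs : 0 < s j) :
    0 < p j := by
  obtain ⟨k, hk⟩ := hE.exists_pos hs
  rw [← hE.eq_price_of_pos k j hk]
  exact mul_pos (div_pos (hB k) (hE.utility_pos k)) (hv k j)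

lemma sum_price_mul_supply_le (hp : ∀ j, 0 ≤ p j) {S : Finset (Fin m)} {T : Finset ι}
    (hST : ∀ j ∈ S, ∀ k, 0 < x k j → k ∈ T) : ∑ j ∈ S, p j * s j ≤ ∑ k ∈ T, B k :=
  calc ∑ j ∈ S, p j * s j = ∑ j ∈ S, ∑ k ∈ T, p j * x k j := by
        refine sum_congr rfl fun j hj => ?_
        rw [← hE.clears, mul_sum]
        refine (sum_subset (subset_univ T) fun k _ hk => ?_).symm
        rw [← (hE.nonneg k j).eq_of_not_lt (mt (hST j hj k) hk), mul_zero]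
    _ = ∑ k ∈ T, ∑ j ∈ S, p j * x k j := sum_comm
    _ ≤ ∑ k ∈ T, ∑ j, p j * x k j := sum_le_sum fun k _ =>
        sum_le_sum_of_subset_of_nonneg (subset_univ S) fun j _ _ =>
          mul_nonneg (hp j) (hE.nonneg k j)
    _ = ∑ k ∈ T, B k := sum_congr rfl fun k _ => hE.sum_price_mul k

lemma budget_lt_sum_price_mul {k : ι} (hB : 0 < B k) {y : Fin m → ℝ} (hy : ∀ j, 0 ≤ y j)
    (hyu : 0 < ∑ j, v k j * y j) (hlt : B k / ∑ j, v k j * y j < B k / utility v x k) :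
    B k < ∑ j, p j * y j := by
  have hu := hE.utility_pos k
  have hlt_u : utility v x k < ∑ j, v k j * y j := (div_lt_div_iff_of_pos_left hB hyu hu).1 hlt
  calc B k = B k / utility v x k * utility v x k := (div_mul_cancel₀ _ hu.ne').symm
    _ < B k / utility v x k * ∑ j, v k j * y j := mul_lt_mul_of_pos_left hlt_u (div_pos hB hu)
    _ = ∑ j, B k / utility v x k * v k j * y j := by simp_rw [mul_sum, mul_assoc]
    _ ≤ ∑ j, p j * y j := sum_le_sum fun j _ => mul_le_mul_of_nonneg_right (hE.le_price k j) (hy j)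

end IsEquilibrium

lemma Feasible.sum_sum_price_mul_le (hx : Feasible s x) {p : Fin m → ℝ} (hp : ∀ j, 0 ≤ p j)
    {T : Finset ι} {S : Finset (Fin m)} (hTS : ∀ k ∈ T, ∀ j, 0 < x k j → j ∈ S) :
    ∑ k ∈ T, ∑ j, p j * x k j ≤ ∑ j ∈ S, p j * s j :=
  calc ∑ k ∈ T, ∑ j, p j * x k j = ∑ k ∈ T, ∑ j ∈ S, p j * x k j := by
        refine sum_congr rfl fun k hk => (sum_subset (subset_univ S) fun j _ hj => ?_).symm
        rw [← (hx.1 k j).eq_of_not_lt (mt (hTS k hk j) hj), mul_zero]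
    _ = ∑ j ∈ S, p j * ∑ k ∈ T, x k j := by rw [sum_comm]; simp_rw [mul_sum]
    _ ≤ ∑ j ∈ S, p j * s j := sum_le_sum fun j _ => mul_le_mul_of_nonneg_left
        ((sum_le_sum_of_subset_of_nonneg (subset_univ T) fun k _ _ => hx.1 k j).trans (hx.2 j))
        (hp j)

theorem IsEquilibrium.price_le_of_injective {ι' : Type*} [Fintype ι'] {v : ι' → Fin m → ℝ}
    {B : ι' → ℝ} {e : ι → ι'} (he : Function.Injective e) {x' : ι' → Fin m → ℝ}
    {p p' : Fin m → ℝ} (hv : ∀ k j, 0 < v k j) (hB : ∀ k, 0 < B k) (hs : ∀ j, 0 < s j)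
    (hE : IsEquilibrium s (fun k => v (e k)) (fun k => B (e k)) x p)
    (hE' : IsEquilibrium s v B x' p') (j : Fin m) : p j ≤ p' j := by
  classical
  by_contra! hj
  let S : Finset (Fin m) := {j | p' j < p j}
  let T : Finset ι :=
    {k | B (e k) / utility v x' (e k) < B (e k) / utility (fun k => v (e k)) x k}
  have hST : ∀ j ∈ S, ∀ k, 0 < x k j → k ∈ T := by
    intro j hj k hk
    simp only [S, T, mem_filter, mem_univ, true_and] at hj ⊢
    have := (hE'.le_price (e k) j).trans_lt (hj.trans_eq (hE.eq_price_of_pos k j hk).symm)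
    exact lt_of_mul_lt_mul_right this (hv _ j).le
  have hTS : ∀ k' ∈ T.map ⟨e, he⟩, ∀ j, 0 < x' k' j → j ∈ S := by
    simp only [mem_map, Function.Embedding.coeFn_mk]
    rintro _ ⟨k, hk, rfl⟩ j hkj
    simp only [S, T, mem_filter, mem_univ, true_and] at hk ⊢
    rw [← hE'.eq_price_of_pos _ j hkj]
    exact (mul_lt_mul_of_pos_right hk (hv _ j)).trans_le (hE.le_price k j)
  have hp : ∀ j, 0 ≤ p j := fun j =>
    (hE.price_pos (fun k => hv (e k)) (fun k => hB (e k)) (hs j)).le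
  have hT : T.Nonempty := by
    obtain ⟨k, hk⟩ := hE.exists_pos (hs j)
    exact ⟨k, hST j (by simpa [S] using hj) k hk⟩
  have := calc ∑ j ∈ S, p j * s j ≤ ∑ k ∈ T, B (e k) := hE.sum_price_mul_supply_le hp hST
    _ < ∑ k ∈ T, ∑ j, p j * x' (e k) j := sum_lt_sum_of_nonempty hT fun k hk =>
        hE.budget_lt_sum_price_mul (hB _) (hE'.nonneg _) (hE'.utility_pos _) (mem_filter.1 hk).2
    _ = ∑ k' ∈ T.map ⟨e, he⟩, ∑ j, p j * x' k' j := by rw [sum_map]; rfl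
    _ ≤ ∑ j ∈ S, p j * s j :=
        Feasible.sum_sum_price_mul_le ⟨hE'.nonneg, fun j => (hE'.clears j).le⟩ hp hTS
  exact lt_irrefl _ this

end

theorem single_buyer_small_price_effect_general {n m : ℕ}
    (v : Fin n → Fin m → ℝ) (B : Fin n → ℝ) (s : Fin m → ℝ)
    (hv : ∀ i j, 0 < v i j) (hB : ∀ i, 0 < B i) (hs : ∀ j, 0 < s j)
    (i : Fin n)
    (x : {k : Fin n // k ≠ i} → Fin m → ℝ)
    (hx : EGMax s (fun k => v k.1) (fun k => B k.1) x)
    (x' : Fin n → Fin m → ℝ) (hx' : EGMax s v B x')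
    (p p' : Fin m → ℝ)
    (hp : ∀ j, IsGreatest
      (Set.range fun k : {k : Fin n // k ≠ i} =>
        (B k.1 / (∑ j', v k.1 j' * x k j')) * v k.1 j) (p j))
    (hp' : ∀ j, IsGreatest
      (Set.range fun k : Fin n =>
        (B k / (∑ j', v k j' * x' k j')) * v k j) (p' j)) :
    ∀ j, p j ≤ p' j ∧ p' j ≤ p j + B i / s j := by
  intro j
  have : Nonempty (Fin m) := ⟨j⟩
  have hE := hx.isEquilibrium (fun k : {k // k ≠ i} => hv k) (fun k => hB k) hs hp
  have hE' := hx'.isEquilibrium hv hB hs hp'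
  have hle : ∀ l, p l ≤ p' l := hE.price_le_of_injective Subtype.val_injective hv hB hs hE'
  have htotal : ∑ l, (p' l - p l) * s l = B i := by
    classical
    simp only [sub_mul, sum_sub_distrib, hE.sum_price_mul_supply, hE'.sum_price_mul_supply,
      Fintype.sum_eq_add_sum_subtype_ne B i, add_sub_cancel_right]
  have hj : (p' j - p j) * s j ≤ B i :=
    htotal ▸ single_le_sum (fun l _ => mul_nonneg (sub_nonneg.2 (hle l)) (hs l).le) (mem_univ j)
  refine ⟨hle j, ?_⟩
  rw [← le_div_iff₀ (hs j)] at hj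
  linarith

/-- **A single buyer has a small effect on CEEI prices.**  Fix a buyer `i` in a
linear Fisher market.  Let `p` be the (unique) CEEI price vector of the market
consisting of all buyers except `i` (with their budgets), and let `p'` be the CEEI
price vector of the full market including buyer `i` with budget `B i`.  Then for
every item `j`, `p j ≤ p' j ≤ p j + B i / s j`; that is, a single buyer can affect
the price of any item `j` by at most `B i / s j`. -/
theorem single_buyer_small_price_effect {n m : ℕ} (hm : 0 < m)
    (v : Fin n → Fin m → ℝ) (B : Fin n → ℝ) (s : Fin m → ℝ)
    (hv : ∀ i j, 0 < v i j) (hB : ∀ i, 0 < B i) (hs : ∀ j, 0 < s j)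
    (i : Fin n)
    (x : {k : Fin n // k ≠ i} → Fin m → ℝ)
    (hx : EGMax s (fun k => v k.1) (fun k => B k.1) x)
    (x' : Fin n → Fin m → ℝ) (hx' : EGMax s v B x')
    (p p' : Fin m → ℝ)
    (hp : ∀ j, IsGreatest
      (Set.range fun k : {k : Fin n // k ≠ i} =>
        (B k.1 / (∑ j', v k.1 j' * x k j')) * v k.1 j) (p j))
    (hp' : ∀ j, IsGreatest
      (Set.range fun k : Fin n =>
        (B k / (∑ j', v k j' * x' k j')) * v k j) (p' j)) :
    ∀ j, p j ≤ p' j ∧ p' j ≤ p j + B i / s j :=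
  single_buyer_small_price_effect_general v B s hv hB hs i x hx x' hx' p p' hp hp'
end
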